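/- Let G be a finite tree (a simple connected acyclic undirected graph) with at least 2 nodes. Then for the majority game on G, the set of all nodes having at least one neighbor of degree 1 (the set of neighbors of the leaves) is a sufficient control set. -/

import Mathlib

open Finset

/-- The indicator strategy profile `𝟙_S` of a set of players `S`: action `1` (here `true`)
on `S` and `0` (here `false`) elsewhere. -/
def indicator {V : Type*} [DecidableEq V] (S : Finset V) : V → Bool :=
  fun i => decide (i ∈ S)

/-- A finite binary-action game with utilities `u` is super-modular (has increasing
differences) if for every player `i` and profiles `x, y` with `x_{-i} ≥ y_{-i}`
componentwise, `u_i(1, x_{-i}) − u_i(0, x_{-i}) ≥ u_i(1, y_{-i}) − u_i(0, y_{-i})`. -/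
def Supermodular {V : Type*} [DecidableEq V] (u : V → (V → Bool) → ℝ) : Prop :=
  ∀ (i : V) (x y : V → Bool), (∀ j, j ≠ i → y j ≤ x j) →
    u i (Function.update y i true) - u i (Function.update y i false) ≤
      u i (Function.update x i true) - u i (Function.update x i false)

/-- An improvement path from `S` to `T`: a sequence of profiles starting at `𝟙_S` and ending
at `𝟙_T` such that at each step some player `i ∉ S` flips her action (the profile changes
exactly in coordinate `i`) without decreasing her utility. -/
def IsImprovementPath {V : Type*} [Fintype V] [DecidableEq V]
    (u : V → (V → Bool) → ℝ) (S T : Finset V) : Prop :=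
  ∃ (m : ℕ) (x : ℕ → V → Bool),
    x 0 = indicator S ∧ x m = indicator T ∧
    ∀ k < m, ∃ i, i ∉ S ∧
      x (k + 1) = Function.update (x k) i (!(x k i)) ∧
      u i (x k) ≤ u i (x (k + 1))

/-- `S` is a sufficient control set if there is an improvement path from `S` to the whole
player set `V`. -/
def SufficientControlSet {V : Type*} [Fintype V] [DecidableEq V]
    (u : V → (V → Bool) → ℝ) (S : Finset V) : Prop :=
  IsImprovementPath u S Finset.univ

/-- Utilities of the majority game on a finite simple undirected graph `G`: the utility of
player `i` at profile `x` is the number of neighbors `j` of `i` with `x_j = x_i`. -/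
def majU {V : Type*} [Fintype V] [DecidableEq V] (G : SimpleGraph V) [DecidableRel G.Adj] :
    V → (V → Bool) → ℝ :=
  fun i x => ((G.neighborFinset i).filter (fun j => x j = x i)).card

/-!
Root the tree at any vertex `r` and let the players outside the control set switch to `1` one
at a time, farthest from `r` first. When player `i` switches, her neighbors still playing `0`
are no farther from `r` than she is, so in a tree only her parent can be among them. If her
parent does still play `0`, it is not controlled, so `i` is not a leaf; hence `i` has another
neighbor, which already plays `1`, and switching does not lower her utility.
-/

theorem indicator_of_notMem {V : Type*} [DecidableEq V] {T : Finset V} {i : V} (hi : i ∉ T) :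
    indicator T i = false := by
  simp [indicator, hi]

theorem indicator_insert {V : Type*} [DecidableEq V] (T : Finset V) (i : V) :
    indicator (insert i T) = Function.update (indicator T) i true := by
  funext j
  by_cases hj : j = i
  · subst hj; simp [indicator]
  · simp [indicator, hj]

namespace IsImprovementPath

variable {V : Type*} [Fintype V] [DecidableEq V] {u : V → (V → Bool) → ℝ} {S T : Finset V}

theorem refl (u : V → (V → Bool) → ℝ) (S : Finset V) : IsImprovementPath u S S :=
  ⟨0, fun _ => indicator S, rfl, rfl, by simp⟩

theorem insert (hST : IsImprovementPath u S T) {i : V} (hiS : i ∉ S) (hiT : i ∉ T)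
    (hu : u i (indicator T) ≤ u i (indicator (insert i T))) :
    IsImprovementPath u S (insert i T) := by
  obtain ⟨m, x, hx0, hxm, hstep⟩ := hST
  refine ⟨m + 1, fun k => if k ≤ m then x k else indicator (Insert.insert i T),
    by simpa using hx0, by simp, fun k hk => ?_⟩
  rcases Nat.lt_succ_iff_lt_or_eq.mp hk with hk | rfl
  · simpa [hk.le, Nat.succ_le_of_lt hk] using hstep k hk
  · exact ⟨i, hiS, by simp [hxm, indicator_of_notMem hiT, indicator_insert],
      by simpa [hxm, indicator_insert] using hu⟩

end IsImprovementPath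

theorem sufficientControlSet_of_le_insert_of_max {V α : Type*} [Fintype V] [DecidableEq V]
    [LinearOrder α] {u : V → (V → Bool) → ℝ} {S : Finset V} (f : V → α)
    (h : ∀ T, S ⊆ T → ∀ i ∉ T, (∀ j ∉ T, f j ≤ f i) →
      u i (indicator T) ≤ u i (indicator (insert i T))) :
    SufficientControlSet u S := by
  suffices key : ∀ Z : Finset V, Disjoint S Z → IsImprovementPath u S Zᶜ →
      IsImprovementPath u S univ by
    exact key Sᶜ disjoint_compl_right (by simpa using IsImprovementPath.refl u S)
  -- `Z` is the set of players still playing `0`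
  intro Z
  induction Z using Finset.induction_on_max_value f with
  | empty => simp
  | insert a Z haZ hmax ih =>
    intro hdisj hpath
    have haS : a ∉ S := disjoint_right.mp hdisj (mem_insert_self a Z)
    have hcompl : Insert.insert a (Insert.insert a Z)ᶜ = Zᶜ := by
      ext j; by_cases hj : j = a <;> simp [hj, haZ]
    refine ih (disjoint_of_subset_right (subset_insert a Z) hdisj) (hcompl ▸ ?_)
    refine hpath.insert haS (by simp) (h _ ?_ a (by simp) fun j hj => ?_)
    · exact fun s hs => mem_compl.mpr fun hsZ => disjoint_left.mp hdisj hs hsZ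
    · rcases mem_insert.mp (not_not.mp (mem_compl.not.mp hj)) with rfl | hjZ
      exacts [le_rfl, hmax j hjZ]

theorem SimpleGraph.IsTree.eq_of_adj_of_dist_lt {V : Type*} {G : SimpleGraph V}
    (hG : G.IsTree) (r : V) {v w₁ w₂ : V} (h₁ : G.Adj v w₁) (h₂ : G.Adj v w₂)
    (hd₁ : G.dist r w₁ < G.dist r v) (hd₂ : G.dist r w₂ < G.dist r v) : w₁ = w₂ := by
  have key : ∀ w, G.Adj v w → G.dist r w < G.dist r v →
      ∃ p : G.Walk r v, p.IsPath ∧ p.penultimate = w := by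
    intro w hadj hd
    obtain ⟨q, hq⟩ := (hG.connected r w).exists_walk_length_eq_dist
    have hlen : (q.concat hadj.symm).length = G.dist r v := by
      have := hG.dist_eq_dist_add_one_of_adj r hadj
      rw [Walk.length_concat, hq]
      omega
    exact ⟨_, (q.concat hadj.symm).isPath_of_length_eq_dist hlen, q.penultimate_concat _⟩
  obtain ⟨p₁, hp₁, rfl⟩ := key w₁ h₁ hd₁
  obtain ⟨p₂, hp₂, rfl⟩ := key w₂ h₂ hd₂
  rw [(hG.existsUnique_path r v).unique hp₁ hp₂]

section Majority

variable {V : Type*} [Fintype V] [DecidableEq V] (G : SimpleGraph V) [DecidableRel G.Adj]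

theorem majU_indicator_of_notMem {T : Finset V} {i : V} (hi : i ∉ T) :
    majU G i (indicator T) = #{j ∈ G.neighborFinset i | j ∉ T} := by
  simp [majU, indicator, hi]

theorem majU_indicator_insert (T : Finset V) (i : V) :
    majU G i (indicator (insert i T)) = #{j ∈ G.neighborFinset i | j ∈ T} := by
  unfold majU
  congr 2
  refine filter_congr fun j hj => ?_
  have hji : j ≠ i := (G.ne_of_adj ((G.mem_neighborFinset i j).mp hj)).symm
  simp [indicator, hji]

variable {G}

theorem SimpleGraph.IsTree.majU_le_insert (hG : G.IsTree) (r : V) {T : Finset V}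
    (hT : (univ.filter fun v => ∃ w ∈ G.neighborFinset v, G.degree w = 1) ⊆ T)
    {i : V} (hi : i ∉ T) (hfar : ∀ j ∉ T, G.dist r j ≤ G.dist r i) :
    majU G i (indicator T) ≤ majU G i (indicator (insert i T)) := by
  rw [majU_indicator_of_notMem G hi, majU_indicator_insert, Nat.cast_le]
  have hparent : #{j ∈ G.neighborFinset i | j ∉ T} ≤ 1 := by
    refine card_le_one.mpr fun a ha b hb => ?_
    simp only [mem_filter, SimpleGraph.mem_neighborFinset] at ha hb
    exact hG.eq_of_adj_of_dist_lt r ha.1 hb.1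
      ((hfar a ha.2).lt_of_ne (hG.dist_ne_of_adj r ha.1).symm)
      ((hfar b hb.2).lt_of_ne (hG.dist_ne_of_adj r hb.1).symm)
  rcases eq_empty_or_nonempty {j ∈ G.neighborFinset i | j ∉ T} with hempty | ⟨a, ha⟩
  · simp [hempty]
  simp only [mem_filter, SimpleGraph.mem_neighborFinset] at ha
  have hleaf : G.degree i ≠ 1 := fun hdeg => ha.2 (hT (by simpa using ⟨i, ha.1.symm, hdeg⟩))
  have hpos : 0 < G.degree i := G.degree_pos_iff_exists_adj i |>.mpr ⟨a, ha.1⟩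
  have hsplit := card_filter_add_card_filter_not (s := G.neighborFinset i) (p := (· ∈ T))
  rw [SimpleGraph.card_neighborFinset_eq_degree] at hsplit
  omega

end Majority

theorem tree_neighbors_of_leaves_sufficient_general
    {V : Type*} [Fintype V] [DecidableEq V]
    (G : SimpleGraph V) [DecidableRel G.Adj]
    (htree : G.IsTree) :
    SufficientControlSet (majU G)
      (Finset.univ.filter fun v => ∃ w ∈ G.neighborFinset v, G.degree w = 1) := by
  obtain ⟨r⟩ := htree.connected.nonempty
  exact sufficientControlSet_of_le_insert_of_max (G.dist r)
    fun _ hT _ hi hfar => htree.majU_le_insert r hT hi hfar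

/-- For the majority game on a finite tree (a simple connected acyclic undirected graph)
with at least two nodes, the set of all nodes having at least one neighbor of degree `1`
(the set of neighbors of the leaves) is a sufficient control set. -/
theorem tree_neighbors_of_leaves_sufficient
    {V : Type*} [Fintype V] [DecidableEq V]
    (G : SimpleGraph V) [DecidableRel G.Adj]
    (htree : G.IsTree) (hcard : 2 ≤ Fintype.card V) :
    SufficientControlSet (majU G)
      (Finset.univ.filter fun v => ∃ w ∈ G.neighborFinset v, G.degree w = 1) :=
  tree_neighbors_of_leaves_sufficient_general G htree
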